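/- Let k be a field of characteristic zero and b ≥ 1. There is a short exact sequence of FI-modules 0 → k⟨1⟩ ⊙ k[Hom_FI(−, b−1)] → Res k[Hom_FI(−, b)] → k[Hom_FI(−, b−1)] → 0, where on a finite set U the right-hand map π sends a basis element [f], f : U ↪ {1,…,b}, to [f] if the image of f lies in {1,…,b−1} and to 0 otherwise, and the kernel evaluated at U is ⊕_{W ⊆ U, |W| = |U|−1} k[Hom_FI(W, b−1)], via the isomorphism sending f : W ↪ {1,…,b−1} to its extension g : U ↪ {1,…,b} with g(U∖W) = {b}. In particular π is a morphism of FI-modules (i.e., commutes with the transpose covariant action of injections). -/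

import Mathlib

open scoped Classical
open DirectSum

noncomputable section

/-- The value at a finite set `U` of the `FI`-module `k[Hom_FI(-,b)]^tr`:
the free `k`-module on the injections `U ↪ Fin b`. -/
abbrev FIM (k : Type) [Field k] (b : ℕ) (U : Type) : Type := (U ↪ Fin b) →₀ k

/-- The transpose covariant `FI`-structure map: for an injection `i : U ↪ V'`,
`[f] ↦ Σ_{f' ∘ i = f} [f']`. -/
def FImap (k : Type) [Field k] (b : ℕ) {U V' : Type} [Fintype U] [Fintype V']
    (i : U ↪ V') : FIM k b U →ₗ[k] FIM k b V' :=
  Finsupp.lift (FIM k b V') k (U ↪ Fin b)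
    (fun f => ∑ f' ∈ Finset.univ.filter (fun f' : V' ↪ Fin b => ∀ u, f' (i u) = f u),
      Finsupp.single f' 1)

/-- The surjection `π : k[Hom_FI(U,b)] → k[Hom_FI(U,b-1)]` sending `[f]` to `[f]` if the
image of `f` lies in `Fin (b-1)` and to `0` otherwise. -/
def piMap (k : Type) [Field k] (b : ℕ) (hb : 1 ≤ b) (U : Type) [Fintype U] :
    FIM k b U →ₗ[k] FIM k (b - 1) U :=
  Finsupp.lift (FIM k (b - 1) U) k (U ↪ Fin b)
    (fun f => if h : ∀ u, (f u : ℕ) < b - 1 then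
      Finsupp.single
        ⟨fun u => ⟨(f u : ℕ), h u⟩, by
          intro u v huv
          apply f.injective
          apply Fin.ext
          have h1 : ((⟨(f u : ℕ), h u⟩ : Fin (b - 1)) : ℕ) =
              ((⟨(f v : ℕ), h v⟩ : Fin (b - 1)) : ℕ) := congrArg Fin.val huv
          simpa using h1⟩ 1
      else 0)

/-- Extension of an injection `{x : U // x ≠ u} ↪ Fin (b-1)` to an injection
`U ↪ Fin b` sending `u` to the top element `b - 1`. -/
def extendEmb (b : ℕ) (hb : 1 ≤ b) {U : Type} (u : U)
    (f : {x : U // x ≠ u} ↪ Fin (b - 1)) : U ↪ Fin b where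
  toFun x := if h : x = u then ⟨b - 1, by omega⟩
    else Fin.castLE (Nat.sub_le b 1) (f ⟨x, h⟩)
  inj' := by
    intro x y hxy
    dsimp only at hxy
    by_cases hx : x = u <;> by_cases hy : y = u
    · exact hx.trans hy.symm
    · rw [dif_pos hx, dif_neg hy] at hxy
      have h1 := congrArg Fin.val hxy
      have h2 := (f ⟨y, hy⟩).isLt
      simp only [Fin.coe_castLE] at h1
      omega
    · rw [dif_neg hx, dif_pos hy] at hxy
      have h1 := congrArg Fin.val hxy
      have h2 := (f ⟨x, hx⟩).isLt
      simp only [Fin.coe_castLE] at h1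
      omega
    · rw [dif_neg hx, dif_neg hy] at hxy
      have h1 := congrArg Fin.val hxy
      simp only [Fin.coe_castLE] at h1
      have h3 := f.injective (Fin.ext h1)
      exact congrArg Subtype.val h3

/-- The value at `U` of the `FI`-module `k⟨1⟩ ⊙ k[Hom_FI(-,b-1)]`:
`⊕_{W ⊆ U, |W| = |U|-1} k[Hom_FI(W, b-1)]`, with `W` indexed by its complementary
point. -/
abbrev KM (k : Type) [Field k] (b : ℕ) (U : Type) : Type :=
  ⨁ (u : U), FIM k (b - 1) {x : U // x ≠ u}

/-- The inclusion `(k⟨1⟩ ⊙ k[Hom_FI(-,b-1)])(U) → k[Hom_FI(U,b)]`, sending the basis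
element `f : W ↪ Fin (b-1)` in the summand with `W = U \ {u}` to its extension
`g : U ↪ Fin b` with `g u = b - 1` (0-indexed top element of `Fin b`). -/
def alphaMap (k : Type) [Field k] (b : ℕ) (hb : 1 ≤ b) (U : Type) [Fintype U] :
    KM k b U →ₗ[k] FIM k b U :=
  DirectSum.toModule k U (FIM k b U) (fun u =>
    Finsupp.lift (FIM k b U) k ({x : U // x ≠ u} ↪ Fin (b - 1))
      (fun f => Finsupp.single (extendEmb b hb u f) 1))

/-- Restriction of an injection `i : U ↪ V'` to the complement of a point. -/
def restrictEmb {U V' : Type} (i : U ↪ V') (u : U) :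
    {x : U // x ≠ u} ↪ {y : V' // y ≠ i u} where
  toFun x := ⟨i x.1, fun h => x.2 (i.injective h)⟩
  inj' := by
    intro x y h
    apply Subtype.ext
    exact i.injective (congrArg Subtype.val h)

/-- The `FI`-structure map of `k⟨1⟩ ⊙ k[Hom_FI(-,b-1)]` for an injection `i : U ↪ V'`. -/
def KMmap (k : Type) [Field k] (b : ℕ) {U V' : Type} [Fintype U] [Fintype V']
    (i : U ↪ V') : KM k b U →ₗ[k] KM k b V' :=
  DirectSum.toModule k U (KM k b V') (fun u =>
    (DirectSum.lof k V' (fun v => FIM k (b - 1) {y : V' // y ≠ v}) (i u)).comp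
      (FImap k (b - 1) (restrictEmb i u)))

/-- Postcomposition action of `g ∈ S_b` on `k[Hom_FI(U,b)]`. -/
def postMap (k : Type) [Field k] (b : ℕ) {U : Type} [Fintype U]
    (g : Equiv.Perm (Fin b)) : FIM k b U →ₗ[k] FIM k b U :=
  Finsupp.lift (FIM k b U) k (U ↪ Fin b)
    (fun f => Finsupp.single (f.trans g.toEmbedding) 1)

/-- Componentwise postcomposition action of `g ∈ S_{b-1}` on
`(k⟨1⟩ ⊙ k[Hom_FI(-,b-1)])(U)`. -/
def KMpost (k : Type) [Field k] (b : ℕ) {U : Type} [Fintype U]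
    (g : Equiv.Perm (Fin (b - 1))) : KM k b U →ₗ[k] KM k b U :=
  DirectSum.toModule k U (KM k b U) (fun u =>
    (DirectSum.lof k U (fun v => FIM k (b - 1) {x : U // x ≠ v}) u).comp
      (postMap k (b - 1) g))

/-- The inclusion `S_{b-1} ⊆ S_b` fixing the last point. -/
def extPermTop (b : ℕ) : Equiv.Perm (Fin (b - 1)) →* Equiv.Perm (Fin b) :=
  Equiv.Perm.extendDomainHom
    ({ toFun := fun i => ⟨⟨(i : ℕ), lt_of_lt_of_le i.isLt (Nat.sub_le b 1)⟩, i.isLt⟩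
       invFun := fun x => ⟨(x.1 : ℕ), x.2⟩
       left_inv := fun _ => rfl
       right_inv := fun _ => rfl } :
      Fin (b - 1) ≃ {x : Fin b // (x : ℕ) < b - 1})

end

/-!
An injection `g : U ↪ Fin b` either misses the top point `b - 1`, and is then an injection
into `Fin (b - 1)`, or hits it at exactly one `u`, and is then the extension of an injection
`U \ {u} ↪ Fin (b - 1)`. On bases this splits `k[Hom(U, b)]` as
`k[Hom(U, b - 1)] ⊕ ⊕_u k[Hom(U \ {u}, b - 1)]`, with `α` the inclusion of the second summand
and `π` the projection onto the first; the complementary maps `β` (`alphaRetraction`) and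
`σ` (`piSection`) satisfy `β α = 1`, `π σ = 1`, `π α = 0` and `α β + σ π = 1`, which is
exactness. For the compatibility with `FI` and with `S_{b-1}` the key observation is that
`π` and the `FI`-maps are transposes of maps of bases: `(π x) h = x (h as a map into Fin b)` and
`(i_* x) f = x (f ∘ i)`, so `π` commutes with them because the maps of bases do.
-/
open Function

theorem LinearMap.range_eq_ker_of_add_comp_eq_id {R M N P : Type*} [Semiring R]
    [AddCommMonoid M] [AddCommMonoid N] [AddCommMonoid P] [Module R M] [Module R N] [Module R P]
    {α : M →ₗ[R] N} {π : N →ₗ[R] P} (β : N →ₗ[R] M) (σ : P →ₗ[R] N)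
    (hπα : π ∘ₗ α = 0) (h : α ∘ₗ β + σ ∘ₗ π = LinearMap.id) :
    LinearMap.range α = LinearMap.ker π := by
  refine le_antisymm (LinearMap.range_le_ker_iff.mpr hπα) fun x hx => ⟨β x, ?_⟩
  simpa [LinearMap.mem_ker.mp hx] using LinearMap.congr_fun h x

theorem Finsupp.lift_single_one {R M X : Type*} [Semiring R] [AddCommMonoid M] [Module R M]
    (φ : X → M) (x : X) : Finsupp.lift M R X φ (Finsupp.single x 1) = φ x := by
  simp [Finsupp.lift_apply]

theorem Finsupp.linearMap_apply_eq_of_single {R X Y : Type*} [Semiring R]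
    (F : (X →₀ R) →ₗ[R] (Y →₀ R)) (φ : Y → X)
    (h : ∀ x y, F (Finsupp.single x 1) y = Finsupp.single x 1 (φ y)) (z : X →₀ R) (y : Y) :
    F z y = z (φ y) := by
  have : Finsupp.lapply y ∘ₗ F = Finsupp.lapply (φ y) :=
    Finsupp.lhom_ext' fun x => LinearMap.ext_ring (h x y)
  exact LinearMap.congr_fun this z

section Embeddings

variable {b : ℕ} {U : Type}

def castDownEmb (g : U ↪ Fin b) (h : ∀ u, (g u : ℕ) < b - 1) : U ↪ Fin (b - 1) where
  toFun u := ⟨g u, h u⟩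
  inj' _ _ hxy := g.injective (Fin.ext (Fin.mk.inj hxy))

def castUpEmb (f : U ↪ Fin (b - 1)) : U ↪ Fin b := f.trans (Fin.castLEEmb (Nat.sub_le b 1))

def restrictTopEmb (g : U ↪ Fin b) (u : U) (hg : (g u : ℕ) = b - 1) :
    {x : U // x ≠ u} ↪ Fin (b - 1) where
  toFun x := ⟨g x, by
    have hne : (g x : ℕ) ≠ g u := fun h => x.2 (g.injective (Fin.ext h))
    have := (g x).isLt
    omega⟩
  inj' _ _ hxy := Subtype.ext (g.injective (Fin.ext (Fin.mk.inj hxy)))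

lemma castUpEmb_apply_lt (f : U ↪ Fin (b - 1)) (u : U) : (castUpEmb f u : ℕ) < b - 1 :=
  (f u).isLt

lemma castUpEmb_injective : Injective (castUpEmb : (U ↪ Fin (b - 1)) → U ↪ Fin b) :=
  fun _ _ h => Embedding.ext fun u =>
    Fin.castLE_injective (Nat.sub_le b 1) (Embedding.ext_iff.mp h u)

@[simp] lemma castUpEmb_castDownEmb (g : U ↪ Fin b) (h : ∀ u, (g u : ℕ) < b - 1) :
    castUpEmb (castDownEmb g h) = g := rfl

lemma extendEmb_apply_self (hb : 1 ≤ b) (u : U) (f : {x : U // x ≠ u} ↪ Fin (b - 1)) :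
    (extendEmb b hb u f u : ℕ) = b - 1 := by
  simp [extendEmb]

lemma extendEmb_apply_of_ne (hb : 1 ≤ b) (u : U) (f : {x : U // x ≠ u} ↪ Fin (b - 1))
    {x : U} (h : x ≠ u) : (extendEmb b hb u f x : ℕ) = f ⟨x, h⟩ := by
  simp [extendEmb, h]

lemma extendEmb_apply_eq_top_iff (hb : 1 ≤ b) (u : U) (f : {x : U // x ≠ u} ↪ Fin (b - 1))
    {x : U} : (extendEmb b hb u f x : ℕ) = b - 1 ↔ x = u := by
  refine ⟨fun h => by_contra fun hx => ?_, fun h => h ▸ extendEmb_apply_self hb u f⟩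
  have := (f ⟨x, hx⟩).isLt
  rw [extendEmb_apply_of_ne hb u f hx] at h
  omega

lemma extendEmb_restrictTopEmb (hb : 1 ≤ b) (g : U ↪ Fin b) (u : U)
    (hg : (g u : ℕ) = b - 1) : extendEmb b hb u (restrictTopEmb g u hg) = g := by
  ext x
  by_cases h : x = u
  · subst h; rw [extendEmb_apply_self, hg]
  · rw [extendEmb_apply_of_ne hb u _ h]; rfl

lemma restrictTopEmb_extendEmb (hb : 1 ≤ b) (u : U) (f : {x : U // x ≠ u} ↪ Fin (b - 1))
    (hg : (extendEmb b hb u f u : ℕ) = b - 1) : restrictTopEmb (extendEmb b hb u f) u hg = f := by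
  ext x
  exact extendEmb_apply_of_ne hb u f x.2

lemma extendEmb_injective (hb : 1 ≤ b) (u : U) : Injective (extendEmb b hb u) :=
  fun f₁ f₂ h => Embedding.ext fun x => Fin.ext <| by
    simpa only [extendEmb_apply_of_ne hb u _ x.2] using congrArg (fun g => (g x.1 : ℕ)) h

lemma trans_extendEmb {V' : Type} (hb : 1 ≤ b) (i : U ↪ V') (u : U)
    (f : {y : V' // y ≠ i u} ↪ Fin (b - 1)) :
    i.trans (extendEmb b hb (i u) f) = extendEmb b hb u ((restrictEmb i u).trans f) := by
  ext x
  by_cases hx : x = u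
  · subst hx
    simp only [Embedding.trans_apply, extendEmb_apply_self]
  · have hix : i x ≠ i u := i.injective.ne hx
    simp only [Embedding.trans_apply, extendEmb_apply_of_ne hb _ _ hix,
      extendEmb_apply_of_ne hb _ _ hx]
    rfl

lemma extPermTop_apply_castLE (g : Equiv.Perm (Fin (b - 1))) (x : Fin (b - 1)) :
    extPermTop b g (Fin.castLE (Nat.sub_le b 1) x) = Fin.castLE (Nat.sub_le b 1) (g x) :=
  Equiv.Perm.extendDomain_apply_image g _ x

lemma extPermTop_apply_of_not_lt (g : Equiv.Perm (Fin (b - 1))) {x : Fin b}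
    (h : ¬ (x : ℕ) < b - 1) : extPermTop b g x = x :=
  Equiv.Perm.extendDomain_apply_not_subtype g _ h

end Embeddings

section BasisFormulas

variable (k : Type) [Field k] {b : ℕ} {U V' : Type}

noncomputable abbrev KM.single (u : U) (f : {x : U // x ≠ u} ↪ Fin (b - 1)) : KM k b U :=
  DirectSum.lof k U (fun v => FIM k (b - 1) {x : U // x ≠ v}) u (Finsupp.single f 1)

variable {k}

lemma FIM.hom_ext {M : Type} [AddCommMonoid M] [Module k M] {F G : FIM k b U →ₗ[k] M}
    (h : ∀ f, F (Finsupp.single f 1) = G (Finsupp.single f 1)) : F = G :=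
  Finsupp.lhom_ext' fun f => LinearMap.ext_ring (h f)

lemma KM.hom_ext {M : Type} [AddCommMonoid M] [Module k M] {F G : KM k b U →ₗ[k] M}
    (h : ∀ u f, F (KM.single k u f) = G (KM.single k u f)) : F = G :=
  DirectSum.linearMap_ext k fun u => Finsupp.lhom_ext' fun f => LinearMap.ext_ring (h u f)

variable (k)

lemma FImap_apply [Fintype U] [Fintype V'] (i : U ↪ V') (x : FIM k b U) (f : V' ↪ Fin b) :
    FImap k b i x f = x (i.trans f) := by
  refine Finsupp.linearMap_apply_eq_of_single _ (fun f => i.trans f) (fun f₀ f => ?_) x f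
  simp only [FImap, Finsupp.lift_single_one, Finsupp.finsetSum_apply, Finsupp.single_apply,
    Finset.sum_ite_eq', Finset.mem_filter, Finset.mem_univ, true_and]
  simp [Embedding.ext_iff, eq_comm]

lemma piMap_single [Fintype U] (hb : 1 ≤ b) (g : U ↪ Fin b) :
    piMap k b hb U (Finsupp.single g 1) =
      if h : ∀ u, (g u : ℕ) < b - 1 then Finsupp.single (castDownEmb g h) 1 else 0 := by
  rw [piMap, Finsupp.lift_single_one]
  rfl

lemma piMap_apply [Fintype U] (hb : 1 ≤ b) (x : FIM k b U) (f : U ↪ Fin (b - 1)) :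
    piMap k b hb U x f = x (castUpEmb f) := by
  refine Finsupp.linearMap_apply_eq_of_single _ castUpEmb (fun g f => ?_) x f
  rw [piMap_single]
  split_ifs with h
  · conv_rhs => rw [← castUpEmb_castDownEmb g h, Finsupp.single_apply_left castUpEmb_injective]
  · rw [Finsupp.single_apply, if_neg (fun hg : g = castUpEmb f => h (hg ▸ castUpEmb_apply_lt f)),
      Finsupp.coe_zero, Pi.zero_apply]

lemma postMap_apply [Fintype U] (g : Equiv.Perm (Fin b)) (x : FIM k b U) (f : U ↪ Fin b) :
    postMap k b g x f = x (f.trans g⁻¹.toEmbedding) := by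
  refine Finsupp.linearMap_apply_eq_of_single _ (fun f => f.trans g⁻¹.toEmbedding)
    (fun f₀ f => ?_) x f
  simp only [postMap, Finsupp.lift_single_one, Finsupp.single_apply, Embedding.ext_iff]
  congr 1
  exact propext ⟨fun h u => by simp [← h], fun h u => by simp [h]⟩

lemma alphaMap_lof [Fintype U] (hb : 1 ≤ b) (u : U) (y : FIM k (b - 1) {x : U // x ≠ u}) :
    alphaMap k b hb U (DirectSum.lof k U (fun v => FIM k (b - 1) {x : U // x ≠ v}) u y) =
      Finsupp.mapDomain (extendEmb b hb u) y := by
  rw [alphaMap, DirectSum.toModule_lof, ← Finsupp.lmapDomain_apply k k]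
  congr 1
  exact FIM.hom_ext fun f => by simp

lemma alphaMap_single [Fintype U] (hb : 1 ≤ b) (u : U) (f : {x : U // x ≠ u} ↪ Fin (b - 1)) :
    alphaMap k b hb U (KM.single k u f) = Finsupp.single (extendEmb b hb u f) 1 := by
  rw [alphaMap_lof, Finsupp.mapDomain_single]

lemma KMmap_single [Fintype U] [Fintype V'] (i : U ↪ V') (u : U)
    (f : {x : U // x ≠ u} ↪ Fin (b - 1)) :
    KMmap k b i (KM.single k u f) =
      DirectSum.lof k V' (fun v => FIM k (b - 1) {y : V' // y ≠ v}) (i u)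
        (FImap k (b - 1) (restrictEmb i u) (Finsupp.single f 1)) := by
  rw [KMmap, DirectSum.toModule_lof]
  rfl

lemma KMpost_single [Fintype U] (g : Equiv.Perm (Fin (b - 1))) (u : U)
    (f : {x : U // x ≠ u} ↪ Fin (b - 1)) :
    KMpost k b g (KM.single k u f) = KM.single k u (f.trans g.toEmbedding) := by
  rw [KMpost, DirectSum.toModule_lof, LinearMap.comp_apply, postMap, Finsupp.lift_single_one]

end BasisFormulas

section Splitting

variable (k : Type) [Field k] (b : ℕ) (U : Type)

noncomputable def piSection : FIM k (b - 1) U →ₗ[k] FIM k b U :=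
  Finsupp.lmapDomain k k castUpEmb

noncomputable def alphaRetraction : FIM k b U →ₗ[k] KM k b U :=
  Finsupp.lift (KM k b U) k (U ↪ Fin b) fun g =>
    if h : ∃ u, (g u : ℕ) = b - 1 then KM.single k h.choose (restrictTopEmb g _ h.choose_spec)
    else 0

variable {k b U}

lemma alphaRetraction_single_extendEmb (hb : 1 ≤ b) (u : U)
    (f : {x : U // x ≠ u} ↪ Fin (b - 1)) :
    alphaRetraction k b U (Finsupp.single (extendEmb b hb u f) 1) = KM.single k u f := by
  have hex : ∃ u', (extendEmb b hb u f u' : ℕ) = b - 1 := ⟨u, extendEmb_apply_self hb u f⟩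
  rw [alphaRetraction, Finsupp.lift_single_one, dif_pos hex]
  have single_congr : ∀ u' (hu' : (extendEmb b hb u f u' : ℕ) = b - 1), u' = u →
      KM.single k u' (restrictTopEmb _ u' hu') = KM.single k u f := by
    rintro _ hu' rfl
    rw [restrictTopEmb_extendEmb]
  exact single_congr _ _ ((extendEmb_apply_eq_top_iff hb u f).mp hex.choose_spec)

variable [Fintype U]

lemma piMap_single_castUpEmb (hb : 1 ≤ b) (f : U ↪ Fin (b - 1)) :
    piMap k b hb U (Finsupp.single (castUpEmb f) 1) = Finsupp.single f 1 := by
  ext h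
  rw [piMap_apply, Finsupp.single_apply_left castUpEmb_injective]

lemma piMap_single_of_apply_eq_top (hb : 1 ≤ b) {g : U ↪ Fin b} {u : U}
    (hg : (g u : ℕ) = b - 1) : piMap k b hb U (Finsupp.single g 1) = 0 := by
  ext h
  have hne : g ≠ castUpEmb h := fun hgh => by
    have := castUpEmb_apply_lt h u
    rw [← hgh] at this
    omega
  rw [piMap_apply, Finsupp.single_eq_of_ne hne.symm, Finsupp.coe_zero, Pi.zero_apply]

lemma alphaRetraction_comp_alphaMap (hb : 1 ≤ b) :
    alphaRetraction k b U ∘ₗ alphaMap k b hb U = LinearMap.id :=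
  KM.hom_ext fun u f => by
    rw [LinearMap.comp_apply, alphaMap_single, alphaRetraction_single_extendEmb,
      LinearMap.id_apply]

lemma piMap_comp_alphaMap (hb : 1 ≤ b) : piMap k b hb U ∘ₗ alphaMap k b hb U = 0 :=
  KM.hom_ext fun u f => by
    rw [LinearMap.comp_apply, alphaMap_single,
      piMap_single_of_apply_eq_top hb (extendEmb_apply_self hb u f), LinearMap.zero_apply]

lemma piMap_comp_piSection (hb : 1 ≤ b) :
    piMap k b hb U ∘ₗ piSection k b U = LinearMap.id :=
  FIM.hom_ext fun f => by
    rw [LinearMap.comp_apply, piSection, Finsupp.lmapDomain_apply, Finsupp.mapDomain_single,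
      piMap_single_castUpEmb, LinearMap.id_apply]

lemma alphaMap_comp_add_piSection_comp (hb : 1 ≤ b) :
    alphaMap k b hb U ∘ₗ alphaRetraction k b U + piSection k b U ∘ₗ piMap k b hb U =
      LinearMap.id :=
  FIM.hom_ext fun g => by
    rw [LinearMap.add_apply, LinearMap.comp_apply, LinearMap.comp_apply, LinearMap.id_apply]
    by_cases htop : ∃ u, (g u : ℕ) = b - 1
    · rw [piMap_single_of_apply_eq_top hb htop.choose_spec, map_zero, add_zero,
        alphaRetraction, Finsupp.lift_single_one, dif_pos htop, alphaMap_single,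
        extendEmb_restrictTopEmb]
    · have hlt : ∀ u, (g u : ℕ) < b - 1 := fun u =>
        lt_of_le_of_ne (Nat.le_sub_one_of_lt (g u).isLt) fun h => htop ⟨u, h⟩
      rw [alphaRetraction, Finsupp.lift_single_one, dif_neg htop, map_zero, zero_add,
        ← castUpEmb_castDownEmb g hlt, piMap_single_castUpEmb, piSection,
        Finsupp.lmapDomain_apply, Finsupp.mapDomain_single]

end Splitting

section Compatibility

variable {k : Type} [Field k] {b : ℕ} {U V' : Type} [Fintype U] [Fintype V']

lemma piMap_comp_FImap (hb : 1 ≤ b) (i : U ↪ V') :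
    piMap k b hb V' ∘ₗ FImap k b i = FImap k (b - 1) i ∘ₗ piMap k b hb U :=
  LinearMap.ext fun x => Finsupp.ext fun f => by
    simp only [LinearMap.comp_apply, piMap_apply, FImap_apply]
    rfl

lemma FImap_comp_alphaMap (hb : 1 ≤ b) (i : U ↪ V') :
    FImap k b i ∘ₗ alphaMap k b hb U = alphaMap k b hb V' ∘ₗ KMmap k b i :=
  KM.hom_ext fun u f => Finsupp.ext fun g => by
    rw [LinearMap.comp_apply, LinearMap.comp_apply, alphaMap_single, FImap_apply, KMmap_single,
      alphaMap_lof]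
    by_cases hg : (g (i u) : ℕ) = b - 1
    · obtain ⟨f', rfl⟩ : ∃ f', extendEmb b hb (i u) f' = g :=
        ⟨_, extendEmb_restrictTopEmb hb g (i u) hg⟩
      rw [Finsupp.mapDomain_apply (extendEmb_injective hb _), FImap_apply, trans_extendEmb,
        Finsupp.single_apply_left (extendEmb_injective hb u)]
    · have hne : extendEmb b hb u f ≠ i.trans g := fun h =>
        hg (by rw [← extendEmb_apply_self hb u f, h]; rfl)
      have hg' : g ∉ Set.range (extendEmb b hb (i u)) := by
        rintro ⟨f', rfl⟩
        exact hg (extendEmb_apply_self hb _ f')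
      rw [Finsupp.single_eq_of_ne hne.symm, Finsupp.mapDomain_of_notMem_range _ _ hg']

lemma piMap_comp_postMap (hb : 1 ≤ b) (g : Equiv.Perm (Fin (b - 1))) :
    piMap k b hb U ∘ₗ postMap k b (extPermTop b g) =
      postMap k (b - 1) g ∘ₗ piMap k b hb U :=
  LinearMap.ext fun x => Finsupp.ext fun f => by
    rw [LinearMap.comp_apply, LinearMap.comp_apply, piMap_apply, postMap_apply, postMap_apply,
      piMap_apply, ← map_inv]
    congr 1
    ext u
    exact congrArg Fin.val (extPermTop_apply_castLE g⁻¹ (f u))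

lemma alphaMap_comp_KMpost (hb : 1 ≤ b) (g : Equiv.Perm (Fin (b - 1))) :
    alphaMap k b hb U ∘ₗ KMpost k b g = postMap k b (extPermTop b g) ∘ₗ alphaMap k b hb U :=
  KM.hom_ext fun u f => by
    rw [LinearMap.comp_apply, LinearMap.comp_apply, KMpost_single, alphaMap_single,
      alphaMap_single, postMap, Finsupp.lift_single_one]
    congr 1
    ext x
    by_cases hx : x = u
    · subst hx
      have htop : ¬ (extendEmb b hb x f x : ℕ) < b - 1 := by
        rw [extendEmb_apply_self]; omega
      simp only [Embedding.trans_apply, Equiv.coe_toEmbedding,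
        extPermTop_apply_of_not_lt g htop, extendEmb_apply_self]
    · have hcast : extendEmb b hb u f x = Fin.castLE (Nat.sub_le b 1) (f ⟨x, hx⟩) :=
        Fin.ext (extendEmb_apply_of_ne hb u f hx)
      simp only [Embedding.trans_apply, Equiv.coe_toEmbedding, hcast, extPermTop_apply_castLE,
        extendEmb_apply_of_ne hb u _ hx, Fin.val_castLE]

end Compatibility

/-- For `b ≥ 1` there is a short exact sequence of `FI`-modules (valued in
`k[S_{b-1}]`-modules)
`0 → k⟨1⟩ ⊙ k[Hom_FI(-, b-1)] → Res k[Hom_FI(-, b)] → k[Hom_FI(-, b-1)] → 0`: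
evaluated at each finite set `U`, `alphaMap` is injective, its range is the kernel of
`piMap`, and `piMap` is surjective; moreover both maps commute with the (transpose,
covariant) `FI`-structure maps and with the `S_{b-1}`-actions. -/
theorem stmt19 (k : Type) [Field k] (b : ℕ) (hb : 1 ≤ b) :
    ∀ (U V' : Type) [Fintype U] [Fintype V'] (i : U ↪ V'),
      Function.Injective (alphaMap k b hb U) ∧
      LinearMap.range (alphaMap k b hb U) = LinearMap.ker (piMap k b hb U) ∧
      Function.Surjective (piMap k b hb U) ∧
      (piMap k b hb V').comp (FImap k b i) = (FImap k (b - 1) i).comp (piMap k b hb U) ∧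
      (FImap k b i).comp (alphaMap k b hb U) = (alphaMap k b hb V').comp (KMmap k b i) ∧
      (∀ g : Equiv.Perm (Fin (b - 1)),
        (piMap k b hb U).comp (postMap k b (extPermTop b g)) =
          (postMap k (b - 1) g).comp (piMap k b hb U) ∧
        (alphaMap k b hb U).comp (KMpost k b g) =
          (postMap k b (extPermTop b g)).comp (alphaMap k b hb U)) := by
  intro U V' _ _ i
  exact ⟨LinearMap.injective_of_comp_eq_id _ _ (alphaRetraction_comp_alphaMap hb),
    LinearMap.range_eq_ker_of_add_comp_eq_id _ _ (piMap_comp_alphaMap hb)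
      (alphaMap_comp_add_piSection_comp hb),
    LinearMap.surjective_of_comp_eq_id _ _ (piMap_comp_piSection hb),
    piMap_comp_FImap hb i, FImap_comp_alphaMap hb i,
    fun g => ⟨piMap_comp_postMap hb g, alphaMap_comp_KMpost hb g⟩⟩
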